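/- Let f_1, f_2 be continuous self-maps of the circle and suppose there exist maps h_1,...,h_k, T_1,...,T_s, S_1,...,S_r in the semigroup generated by f_1, f_2, an arc B, and an open set W ⊇ closure(B) such that: (a) every point of closure(B) is a limit of h_{i_1} ∘ ... ∘ h_{i_n}(y) for some sequence (i_j) uniformly in y ∈ B (so B is contained in the closure of every semigroup orbit of every point of B); (b) S^1 = ⋃_{i=1}^s T_i(B) = ⋃_{i=1}^r S_i^{-1}(B). Then the IFS generated by f_1, f_2 is forward minimal: every semigroup orbit is dense in S^1. -/

import Mathlib

open Set

/-- Composition of the two generators along a finite word. -/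
def listComp (f : Bool → AddCircle (1 : ℝ) → AddCircle (1 : ℝ)) (l : List Bool) :
    AddCircle (1 : ℝ) → AddCircle (1 : ℝ) :=
  fun x => l.foldl (fun y i => f i y) x

/-- Membership in the semigroup generated by `f true` and `f false`. -/
def InSemigroup (f : Bool → AddCircle (1 : ℝ) → AddCircle (1 : ℝ))
    (h : AddCircle (1 : ℝ) → AddCircle (1 : ℝ)) : Prop :=
  ∃ l : List Bool, l ≠ [] ∧ h = listComp f l

/-! A point `x` is sent by some `S i` into `B`; the orbit of `S i x` accumulates at every
`b ∈ B`, in particular at a `b` with `T j b ∈ I`, and continuity of `T j` lets a nearby orbit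
point `h (S i x)` land in `I` as well. So `T j ∘ h ∘ S i` moves `x` into `I`. -/

section Semigroup

variable (f : Bool → AddCircle (1 : ℝ) → AddCircle (1 : ℝ))

theorem listComp_append (l₁ l₂ : List Bool) :
    listComp f (l₁ ++ l₂) = listComp f l₂ ∘ listComp f l₁ := by
  funext x
  simp [listComp, List.foldl_append]

theorem listComp_cons (i : Bool) (l : List Bool) :
    listComp f (i :: l) = listComp f l ∘ f i :=
  rfl

theorem continuous_listComp (hf : ∀ i, Continuous (f i)) (l : List Bool) :
    Continuous (listComp f l) := by
  induction l with
  | nil => exact continuous_id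
  | cons i l ih => exact (listComp_cons f i l) ▸ ih.comp (hf i)

variable {f}

theorem InSemigroup.comp {g h : AddCircle (1 : ℝ) → AddCircle (1 : ℝ)}
    (hg : InSemigroup f g) (hh : InSemigroup f h) : InSemigroup f (g ∘ h) := by
  obtain ⟨l₁, hl₁, rfl⟩ := hh
  obtain ⟨l₂, -, rfl⟩ := hg
  exact ⟨l₁ ++ l₂, by simp [hl₁], (listComp_append f l₁ l₂).symm⟩

theorem InSemigroup.continuous (hf : ∀ i, Continuous (f i))
    {h : AddCircle (1 : ℝ) → AddCircle (1 : ℝ)} (hh : InSemigroup f h) : Continuous h := by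
  obtain ⟨l, -, rfl⟩ := hh
  exact continuous_listComp f hf l

end Semigroup

theorem minimality_from_local_density_and_cover_general
    (f : Bool → AddCircle (1 : ℝ) → AddCircle (1 : ℝ))
    (hf : ∀ i, Continuous (f i))
    (B : Set (AddCircle (1 : ℝ)))
    -- (a) orbits of points of `B` are dense in `B`
    (ha : ∀ x ∈ B, B ⊆ closure {y | ∃ h, InSemigroup f h ∧ y = h x})
    -- (b) finitely many images and preimages of `B` by semigroup elements cover the circle
    (hb : ∃ (s r : ℕ) (T : Fin s → AddCircle (1 : ℝ) → AddCircle (1 : ℝ))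
        (S : Fin r → AddCircle (1 : ℝ) → AddCircle (1 : ℝ)),
      (∀ i, InSemigroup f (T i)) ∧ (∀ i, InSemigroup f (S i)) ∧
      (∀ i, Function.Bijective (S i)) ∧
      (Set.univ : Set (AddCircle (1 : ℝ))) = ⋃ i : Fin s, T i '' B ∧
      (Set.univ : Set (AddCircle (1 : ℝ))) = ⋃ i : Fin r, S i ⁻¹' B) :
    ∀ x : AddCircle (1 : ℝ), ∀ I : Set (AddCircle (1 : ℝ)), IsOpen I → I.Nonempty →
      ∃ h, InSemigroup f h ∧ h x ∈ I := by
  intro x I hI ⟨z, hzI⟩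
  obtain ⟨s, r, T, S, hT, hS, -, hTcov, hScov⟩ := hb
  obtain ⟨i, hSx⟩ := mem_iUnion.mp (hScov ▸ mem_univ x)
  obtain ⟨j, b, hbB, rfl⟩ := mem_iUnion.mp (hTcov ▸ mem_univ z)
  have hnhds : T j ⁻¹' I ∈ nhds b :=
    ((hT j).continuous hf).continuousAt.preimage_mem_nhds (hI.mem_nhds hzI)
  obtain ⟨_, hyI, h, hh, rfl⟩ := mem_closure_iff_nhds.mp (ha (S i x) hSx hbB) _ hnhds
  exact ⟨T j ∘ h ∘ S i, (hT j).comp (hh.comp (hS i)), hyI⟩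

theorem minimality_from_local_density_and_cover
    (f : Bool → AddCircle (1 : ℝ) → AddCircle (1 : ℝ))
    (hf : ∀ i, Continuous (f i))
    (B W : Set (AddCircle (1 : ℝ)))
    (hBopen : IsOpen B) (hBne : B.Nonempty) (hWopen : IsOpen W) (hBW : closure B ⊆ W)
    -- (a) orbits of points of `B` are dense in `B`
    (ha : ∀ x ∈ B, B ⊆ closure {y | ∃ h, InSemigroup f h ∧ y = h x})
    -- (b) finitely many images and preimages of `B` by semigroup elements cover the circle
    (hb : ∃ (s r : ℕ) (T : Fin s → AddCircle (1 : ℝ) → AddCircle (1 : ℝ))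
        (S : Fin r → AddCircle (1 : ℝ) → AddCircle (1 : ℝ)),
      (∀ i, InSemigroup f (T i)) ∧ (∀ i, InSemigroup f (S i)) ∧
      (∀ i, Function.Bijective (S i)) ∧
      (Set.univ : Set (AddCircle (1 : ℝ))) = ⋃ i : Fin s, T i '' B ∧
      (Set.univ : Set (AddCircle (1 : ℝ))) = ⋃ i : Fin r, S i ⁻¹' B) :
    ∀ x : AddCircle (1 : ℝ), ∀ I : Set (AddCircle (1 : ℝ)), IsOpen I → I.Nonempty →
      ∃ h, InSemigroup f h ∧ h x ∈ I :=
  minimality_from_local_density_and_cover_general f hf B ha hb
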